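/- For every n ≥ 1, the map σ̂_n is a bijection of I_n = {0,1,…,2^n−1} onto itself. -/

import Mathlib

/-!
Since `σ̂ₙ(j) = σ̂ₙ₋₁(j mod 2ⁿ⁻¹) + 2ⁿ⁻¹·c_j` with `c_j ∈ {0, 1}`, it suffices that `c_j` and
`c_{j+2ⁿ⁻¹}` are complementary bits: the two preimages `j`, `j + 2ⁿ⁻¹` of a value of `σ̂ₙ₋₁` are
then sent to different halves of `Iₙ`. The indices `j` and `j + 2ⁿ⁻¹` have the same parity, and
`ν_{m+2ⁿ⁻²} = 1 - ν_m` because the outermost doubling in `ν⁽ⁿ⁾` is `T_{g_1} = T_1`.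
-/

/-- The Sierpinski gasket pattern: `g n m` is `g_m^{(n)} ∈ {0,1}` for `1 ≤ m ≤ n`,
defined by `g_1^{(n)} = g_n^{(n)} = 1` and
`g_m^{(n)} = g_{m-1}^{(n-1)} + g_m^{(n-1)} mod 2` for `2 ≤ m ≤ n−1`. -/
def g : ℕ → ℕ → ℕ
  | 0, _ => 0
  | n + 1, m =>
    if m = 1 ∨ m = n + 1 then 1
    else if 2 ≤ m ∧ m ≤ n then (g n (m - 1) + g n m) % 2
    else 0

/-- The doubling operators `T_0` and `T_1` on binary tuples. -/
def Tmap (α : ℕ) (s : List ℕ) : List ℕ :=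
  if α = 0 then s ++ s else s ++ s.map (fun x => 1 - x)

/-- The binary tuple `ν⁽ⁿ⁾ = (T_{g_1^{(n)}} ∘ T_{g_2^{(n)}} ∘ ⋯ ∘ T_{g_{n-1}^{(n)}})(0)`,
of length `2^{n-1}`. -/
def nuList (n : ℕ) : List ℕ :=
  (List.range (n - 1)).foldr (fun i acc => Tmap (g n (i + 1)) acc) [0]

/-- The entry `ν_m^{(n)}`. -/
def nu (n m : ℕ) : ℕ := (nuList n).getD m 0

/-- The map `σ̂_n` on `I_n = {0, …, 2ⁿ−1}`: `σ̂_1 = id` and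
`σ̂_n(j) = σ̂_{n-1}(j mod 2^{n-1}) + 2^{n-1}·c_j` where `c_{2m} = 1 − ν_m^{(n)}` and
`c_{2m+1} = ν_m^{(n)}`. -/
def sigmaHat : ℕ → ℕ → ℕ
  | 0, j => j
  | 1, j => j
  | n + 2, j =>
    sigmaHat (n + 1) (j % 2 ^ (n + 1)) +
      2 ^ (n + 1) * (if j % 2 = 0 then 1 - nu (n + 2) (j / 2) else nu (n + 2) (j / 2))

lemma Tmap_length (a : ℕ) (s : List ℕ) : (Tmap a s).length = 2 * s.length := by
  unfold Tmap; split <;> simp [two_mul]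

lemma Tmap_le_one {a : ℕ} {s : List ℕ} (hs : ∀ x ∈ s, x ≤ 1) : ∀ x ∈ Tmap a s, x ≤ 1 := by
  unfold Tmap
  split <;> simp only [List.mem_append, List.mem_map] <;> grind

lemma length_foldr_Tmap (f : ℕ → ℕ) (l init : List ℕ) :
    (l.foldr (fun i acc => Tmap (f i) acc) init).length = 2 ^ l.length * init.length := by
  induction l with
  | nil => simp
  | cons a t ih => rw [List.foldr_cons, Tmap_length, ih, List.length_cons, pow_succ]; ring

lemma foldr_Tmap_le_one (f : ℕ → ℕ) (l : List ℕ) {init : List ℕ} (h : ∀ x ∈ init, x ≤ 1) :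
    ∀ x ∈ l.foldr (fun i acc => Tmap (f i) acc) init, x ≤ 1 := by
  induction l with
  | nil => exact h
  | cons _ _ ih => exact Tmap_le_one ih

lemma getD_Tmap_one_add_length {s : List ℕ} {m : ℕ} (hm : m < s.length) :
    (Tmap 1 s).getD (m + s.length) 0 = 1 - s.getD m 0 := by
  simp [Tmap, hm]

lemma nu_le_one (n m : ℕ) : nu n m ≤ 1 := by
  unfold nu
  rcases lt_or_ge m (nuList n).length with h | h
  · rw [List.getD_eq_getElem _ _ h]
    exact foldr_Tmap_le_one _ _ (by simp) _ (List.getElem_mem h)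
  · rw [List.getD_eq_default _ _ h]; omega

lemma exists_nuList_eq_Tmap_one (k : ℕ) :
    ∃ s : List ℕ, s.length = 2 ^ k ∧ nuList (k + 2) = Tmap 1 s := by
  refine ⟨((List.range k).map Nat.succ).foldr (fun i acc => Tmap (g (k + 2) (i + 1)) acc) [0],
    by simp [length_foldr_Tmap], ?_⟩
  have hg : g (k + 2) 1 = 1 := by simp [g]
  rw [nuList, show k + 2 - 1 = k + 1 from rfl, List.range_succ_eq_map, List.foldr_cons, zero_add,
    hg]

lemma nu_add_two_pow {k m : ℕ} (hm : m < 2 ^ k) :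
    nu (k + 2) (m + 2 ^ k) = 1 - nu (k + 2) m := by
  obtain ⟨s, hs, h⟩ := exists_nuList_eq_Tmap_one k
  rw [← hs] at hm ⊢
  rw [nu, nu, h, getD_Tmap_one_add_length hm, Tmap, if_neg one_ne_zero,
    List.getD_append _ _ _ _ hm]

/-- The bit `c_j` of `σ̂_n(j)` in position `n - 1`. -/
def sigmaHatTopBit (n j : ℕ) : ℕ := if j % 2 = 0 then 1 - nu n (j / 2) else nu n (j / 2)

lemma sigmaHat_add_two (k : ℕ) :
    sigmaHat (k + 2) =
      fun j => sigmaHat (k + 1) (j % 2 ^ (k + 1)) + 2 ^ (k + 1) * sigmaHatTopBit (k + 2) j :=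
  rfl

lemma sigmaHatTopBit_add_sigmaHatTopBit {k j : ℕ} (hj : j < 2 ^ (k + 1)) :
    sigmaHatTopBit (k + 2) j + sigmaHatTopBit (k + 2) (j + 2 ^ (k + 1)) = 1 := by
  have hpow : 2 ^ (k + 1) = 2 * 2 ^ k := pow_succ' 2 k
  have hmod : (j + 2 ^ (k + 1)) % 2 = j % 2 := by omega
  have hdiv : (j + 2 ^ (k + 1)) / 2 = j / 2 + 2 ^ k := by omega
  have hflip := nu_add_two_pow (k := k) (m := j / 2) (by omega)
  have hle := nu_le_one (k + 2) (j / 2)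
  unfold sigmaHatTopBit
  rw [hmod, hdiv, hflip]
  split <;> omega

theorem Set.BijOn.mod_add_mul_of_add_eq_one {f c : ℕ → ℕ} {N : ℕ}
    (hf : BijOn f {j | j < N} {j | j < N}) (hc : ∀ j < N, c j + c (j + N) = 1) :
    BijOn (fun j => f (j % N) + N * c j) {j | j < 2 * N} {j | j < 2 * N} := by
  have hc_le : ∀ j < 2 * N, c j ≤ 1 := by
    intro j hj
    rcases lt_or_ge j N with h | h
    · have := hc j h; omega
    · have := hc (j - N) (by omega); rw [Nat.sub_add_cancel h] at this; omega
  have hmaps : MapsTo (fun j => f (j % N) + N * c j) {j | j < 2 * N} {j | j < 2 * N} := by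
    intro j hj
    have hfj : f (j % N) < N := hf.mapsTo (Nat.mod_lt _ (by rw [mem_ofPred_eq] at hj; omega))
    have : N * c j ≤ N * 1 := Nat.mul_le_mul_left _ (hc_le j hj)
    simp only [mem_ofPred_eq]
    omega
  refine ((finite_lt_nat _).surjOn_iff_bijOn_of_mapsTo hmaps).1 fun y hy => ?_
  simp only [mem_ofPred_eq] at hy
  have hN : 0 < N := by omega
  obtain ⟨i, hi, hfi⟩ := hf.surjOn (Nat.mod_lt y hN)
  simp only [mem_ofPred_eq] at hi
  have hyN : y / N < 2 := by rw [Nat.div_lt_iff_lt_mul hN]; omega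
  have hy_eq := Nat.mod_add_div y N
  have hci := hc i hi
  generalize y / N = b at hyN hy_eq
  by_cases hb : c i = b
  · refine ⟨i, by simp only [mem_ofPred_eq]; omega, ?_⟩
    simp only [Nat.mod_eq_of_lt hi, hfi, hb]; omega
  · refine ⟨i + N, by simp only [mem_ofPred_eq]; omega, ?_⟩
    have : c (i + N) = b := by omega
    simp only [Nat.add_mod_right, Nat.mod_eq_of_lt hi, hfi, this]; omega

theorem sigmaHat_bijOn_general (n : ℕ) :
    Set.BijOn (sigmaHat n) {j : ℕ | j < 2 ^ n} {j : ℕ | j < 2 ^ n} := by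
  induction n with
  | zero => exact Set.bijOn_id _
  | succ n ih =>
    cases n with
    | zero => exact Set.bijOn_id _
    | succ k =>
      rw [sigmaHat_add_two, pow_succ' 2 (k + 1)]
      exact ih.mod_add_mul_of_add_eq_one fun j hj => sigmaHatTopBit_add_sigmaHatTopBit hj

/-- For every `n ≥ 1`, the map `σ̂ₙ` is a bijection of
`Iₙ = {0, 1, …, 2ⁿ−1}` onto itself. -/
theorem sigmaHat_bijOn (n : ℕ) (hn : 1 ≤ n) :
    Set.BijOn (sigmaHat n) {j : ℕ | j < 2 ^ n} {j : ℕ | j < 2 ^ n} :=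
  sigmaHat_bijOn_general n
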